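/- Let f : A → A, let c be a cyclic element of period n, and suppose x and y lie in the ∼_f-class of c. Then (x, y) is an f-prohibited pair if and only if d(x, c) − d(y, c) is not divisible by n. -/

import Mathlib

/-!
Only `f^[a] x = c` and `f^[b] y = c` matter, not the minimality of `a` and `b`. If
`u = f^[k] x = f^[l] y` lies on a cycle of length `m`, then `f^[a] u = f^[k] c` puts `u` on the
cycle of `c`, so `m = n`. Both `f^[k + b] c` and `f^[l + a] c` equal `f^[a + b] u`, hence
`k + b ≡ l + a [MOD n]`, and `n ∤ k - l` becomes `n ∤ a - b`. Conversely `k = a`, `l = b`,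
`m = n` witness prohibition, `n ∤ a - b` forcing `n ≥ 2`.
-/

/-- A pair `(x, y)` is `f`-prohibited. -/
def FProhibited {A : Type*} (f : A → A) (x y : A) : Prop :=
  ∃ k l m : ℕ, 2 ≤ m ∧ ¬ ((m : ℤ) ∣ (k : ℤ) - (l : ℤ)) ∧
    (Function.Injective fun i : Fin m => f^[k + (i : ℕ)] x) ∧
    f^[k + m] x = f^[k] x ∧ f^[k] x = f^[l] y

open Function

namespace Function

variable {α : Type*} {f : α → α}

theorem iterate_add_apply_comm (m n : ℕ) (x : α) : f^[m + n] x = f^[n] (f^[m] x) := by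
  rw [add_comm, iterate_add_apply]

theorem iterate_eq_iterate_iff_modEq {x : α} (hx : x ∈ periodicPts f) {a b : ℕ} :
    f^[a] x = f^[b] x ↔ a ≡ b [MOD minimalPeriod f x] := by
  have hpos := minimalPeriod_pos_of_mem_periodicPts hx
  rw [← iterate_mod_minimalPeriod_eq (n := a), ← iterate_mod_minimalPeriod_eq (n := b),
    iterate_eq_iterate_iff_of_lt_minimalPeriod (Nat.mod_lt _ hpos) (Nat.mod_lt _ hpos)]
  rfl

theorem minimalPeriod_eq_of_injective_fin {u : α} {m : ℕ} (hm : 0 < m) (hu : f^[m] u = u)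
    (hinj : Injective fun i : Fin m => f^[i] u) : minimalPeriod f u = m := by
  have hdvd : minimalPeriod f u ∣ m := IsPeriodicPt.minimalPeriod_dvd hu
  have hpos : 0 < minimalPeriod f u := IsPeriodicPt.minimalPeriod_pos hm hu
  refine (Nat.le_of_dvd hm hdvd).antisymm (not_lt.1 fun hlt => ?_)
  have := @hinj ⟨minimalPeriod f u, hlt⟩ ⟨0, hm⟩ (by simp)
  simp only [Fin.mk.injEq] at this
  omega

theorem injective_fin_minimalPeriod (x : α) :
    Injective fun i : Fin (minimalPeriod f x) => f^[i] x :=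
  fun i j hij => Fin.ext (iterate_injOn_Iio_minimalPeriod i.isLt j.isLt hij)

end Function

section Prohibited

variable {A : Type*} {f : A → A} {c x y : A} {a b : ℕ}

theorem FProhibited.not_dvd (hc : c ∈ periodicPts f) (ha : f^[a] x = c) (hb : f^[b] y = c)
    (h : FProhibited f x y) : ¬ (minimalPeriod f c : ℤ) ∣ (a : ℤ) - b := by
  obtain ⟨k, l, m, hm2, hkl, hinj, hcycle, hxy⟩ := h
  set u := f^[k] x with hu
  have hinj' : Injective fun i : Fin m => f^[i] u := by
    simpa only [hu, iterate_add_apply_comm] using hinj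
  have hper_u : minimalPeriod f u = m :=
    minimalPeriod_eq_of_injective_fin (by omega) (by rwa [← iterate_add_apply_comm]) hinj'
  have hu_mem : u ∈ periodicPts f := minimalPeriod_pos_iff_mem_periodicPts.1 (by omega)
  have hau : f^[a] u = f^[k] c := by
    rw [← ha, hu, ← iterate_add_apply, ← iterate_add_apply, add_comm]
  have hm : m = minimalPeriod f c := by
    rw [← hper_u, ← minimalPeriod_apply_iterate hu_mem a, hau, minimalPeriod_apply_iterate hc]
  have hx_side : f^[k + b] c = f^[a + b] u := by
    rw [← ha, hu, ← iterate_add_apply, ← iterate_add_apply]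
    congr 1; ring
  have hy_side : f^[l + a] c = f^[a + b] u := by
    rw [← hb, hxy, ← iterate_add_apply, ← iterate_add_apply]
    congr 1; ring
  have hmod : k + b ≡ l + a [MOD minimalPeriod f c] :=
    (iterate_eq_iterate_iff_modEq hc).1 (hx_side.trans hy_side.symm)
  intro hab
  apply hkl
  have hsplit : (k : ℤ) - l = ((a : ℤ) - b) - (((l + a : ℕ) : ℤ) - ((k + b : ℕ) : ℤ)) := by
    push_cast; ring
  rw [hm, hsplit]
  exact dvd_sub hab hmod.dvd

theorem fProhibited_of_not_dvd (hc : c ∈ periodicPts f) (ha : f^[a] x = c) (hb : f^[b] y = c)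
    (h : ¬ (minimalPeriod f c : ℤ) ∣ (a : ℤ) - b) : FProhibited f x y := by
  have hpos := minimalPeriod_pos_of_mem_periodicPts hc
  have htwo : 2 ≤ minimalPeriod f c := by
    by_contra hlt
    exact h (by simp [show minimalPeriod f c = 1 by omega])
  refine ⟨a, b, minimalPeriod f c, htwo, h, ?_, ?_, ha.trans hb.symm⟩
  · simpa only [iterate_add_apply_comm, ha] using injective_fin_minimalPeriod (f := f) c
  · rw [iterate_add_apply_comm, ha, iterate_minimalPeriod]

theorem fProhibited_iff_of_iterate_eq (hc : c ∈ periodicPts f) (ha : f^[a] x = c)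
    (hb : f^[b] y = c) : FProhibited f x y ↔ ¬ (minimalPeriod f c : ℤ) ∣ (a : ℤ) - b :=
  ⟨FProhibited.not_dvd hc ha hb, fProhibited_of_not_dvd hc ha hb⟩

end Prohibited

theorem stmt13 {A : Type*} (f : A → A) (c : A) (n : ℕ)
    (hn : 1 ≤ n) (hc : f^[n] c = c)
    (hmin : ∀ m : ℕ, 1 ≤ m → f^[m] c = c → n ≤ m)
    (x y : A) (hx : ∃ s : ℕ, f^[s] x = c) (hy : ∃ s : ℕ, f^[s] y = c) :
    FProhibited f x y ↔
      ¬ ((n : ℤ) ∣ ((sInf {t : ℕ | f^[t] x = c} : ℕ) : ℤ) - ((sInf {t : ℕ | f^[t] y = c} : ℕ) : ℤ)) := by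
  have hperiodic : IsPeriodicPt f n c := hc
  have hperiod : minimalPeriod f c = n :=
    (hperiodic.minimalPeriod_le hn).antisymm
      (hmin _ (hperiodic.minimalPeriod_pos hn) iterate_minimalPeriod)
  rw [← hperiod]
  exact fProhibited_iff_of_iterate_eq (mk_mem_periodicPts hn hperiodic)
    (Nat.sInf_mem hx) (Nat.sInf_mem hy)
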